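/- arXiv:1210.3765 — 3 statements merged into one kernel-verified Lean document; each statement's English description precedes it below -/
import Mathlib

section
/- Global optimality condition (Theorem 1): consider minimizing P(x) = ½ xᵀ A x − aᵀx − a₀ subject to g_k(x) = ½ xᵀ B_k x − b_kᵀ x − β_k ≤ 0 for k = 1,…,m, with A and each B_k symmetric. Suppose σ̄ ∈ ℝ^m satisfies σ̄ ≥ 0, and x̄ ∈ ℝ^n satisfies the stationarity condition G(σ̄) x̄ = F(σ̄), the feasibility condition g(x̄) ≤ 0, and the complementary slackness σ̄_k · g_k(x̄) = 0 for each k, where G(σ̄) = A + Σ_k σ̄_k B_k and F(σ̄) = a + Σ_k σ̄_k b_k. If G(σ̄) is positive semidefinite, then x̄ is a global minimizer of P over the feasible set {x : g(x) ≤ 0}. -/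
/-!
Weighting each constraint by its multiplier gives the Lagrangian
`P + ∑ σ̄ₖ gₖ`, which is, up to a constant, the quadratic `½ xᵀ G(σ̄) x − F(σ̄)ᵀ x`.
Stationarity and `G(σ̄) ⪰ 0` make `x̄` a global minimizer of this quadratic, and on the
feasible set the Lagrangian lies below `P` while complementary slackness makes it agree
with `P` at `x̄`.
-/

open Matrix

theorem le_of_forall_lagrangian_le {X ι : Type*} [Fintype ι] (f : X → ℝ) (g : ι → X → ℝ)
    {σ : ι → ℝ} (hσ : 0 ≤ σ) {xb : X}
    (hmin : ∀ x, f xb + ∑ k, σ k * g k xb ≤ f x + ∑ k, σ k * g k x)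
    (hcs : ∀ k, σ k * g k xb = 0) {x : X} (hx : ∀ k, g k x ≤ 0) : f xb ≤ f x := by
  have hxb : ∑ k, σ k * g k xb = 0 := Finset.sum_eq_zero fun k _ => hcs k
  have hx : ∑ k, σ k * g k x ≤ 0 :=
    Finset.sum_nonpos fun k _ => mul_nonpos_of_nonneg_of_nonpos (hσ k) (hx k)
  linarith [hmin x]

namespace Matrix

variable {ι : Type*} [Fintype ι]

noncomputable def quadraticFun (M : Matrix ι ι ℝ) (c : ι → ℝ) (x : ι → ℝ) : ℝ :=
  (1 / 2) * (x ⬝ᵥ (M *ᵥ x)) - c ⬝ᵥ x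

@[simp]
theorem quadraticFun_zero (x : ι → ℝ) : quadraticFun 0 0 x = 0 := by
  simp [quadraticFun]

theorem quadraticFun_add (M N : Matrix ι ι ℝ) (c d x : ι → ℝ) :
    quadraticFun (M + N) (c + d) x = quadraticFun M c x + quadraticFun N d x := by
  simp only [quadraticFun, add_mulVec, dotProduct_add, add_dotProduct]
  ring

theorem quadraticFun_smul (s : ℝ) (M : Matrix ι ι ℝ) (c x : ι → ℝ) :
    quadraticFun (s • M) (s • c) x = s * quadraticFun M c x := by
  simp only [quadraticFun, smul_mulVec, dotProduct_smul, smul_dotProduct, smul_eq_mul]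
  ring

theorem quadraticFun_sum {κ : Type*} (s : Finset κ) (M : κ → Matrix ι ι ℝ) (c : κ → ι → ℝ)
    (x : ι → ℝ) :
    quadraticFun (∑ k ∈ s, M k) (∑ k ∈ s, c k) x = ∑ k ∈ s, quadraticFun (M k) (c k) x := by
  classical
  induction s using Finset.induction_on with
  | empty => simp
  | insert k s hk ih => simp only [Finset.sum_insert hk, quadraticFun_add, ih]

theorem quadraticFun_add_sum_smul {κ : Type*} [Fintype κ] (M : Matrix ι ι ℝ)
    (N : κ → Matrix ι ι ℝ) (c : ι → ℝ) (d : κ → ι → ℝ) (σ : κ → ℝ) (x : ι → ℝ) :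
    quadraticFun (M + ∑ k, σ k • N k) (c + ∑ k, σ k • d k) x
      = quadraticFun M c x + ∑ k, σ k * quadraticFun (N k) (d k) x := by
  simp only [quadraticFun_add, quadraticFun_sum, quadraticFun_smul]

theorem IsSymm.quadraticFun_add_of_mulVec_eq {M : Matrix ι ι ℝ} (hM : M.IsSymm) {c xb : ι → ℝ}
    (hstat : M *ᵥ xb = c) (d : ι → ℝ) :
    quadraticFun M c (xb + d) = quadraticFun M c xb + (1 / 2) * (d ⬝ᵥ (M *ᵥ d)) := by
  have hcross : xb ⬝ᵥ (M *ᵥ d) = c ⬝ᵥ d := by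
    rw [dotProduct_mulVec, ← mulVec_transpose, hM.eq, hstat]
  have hcross' : d ⬝ᵥ (M *ᵥ xb) = c ⬝ᵥ d := by rw [hstat, dotProduct_comm]
  simp only [quadraticFun, mulVec_add, dotProduct_add, add_dotProduct, hcross, hcross']
  ring

theorem PosSemidef.quadraticFun_le_of_mulVec_eq {M : Matrix ι ι ℝ} (hM : M.PosSemidef)
    {c xb : ι → ℝ} (hstat : M *ᵥ xb = c) (x : ι → ℝ) :
    quadraticFun M c xb ≤ quadraticFun M c x := by
  have hsymm : M.IsSymm := hM.isHermitian
  have hnonneg : 0 ≤ (x - xb) ⬝ᵥ (M *ᵥ (x - xb)) := by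
    simpa using hM.dotProduct_mulVec_nonneg (x - xb)
  rw [← add_sub_cancel xb x, hsymm.quadraticFun_add_of_mulVec_eq hstat]
  linarith

end Matrix

theorem global_optimality_condition_general
    (n m : ℕ)
    (A : Matrix (Fin n) (Fin n) ℝ) (B : Fin m → Matrix (Fin n) (Fin n) ℝ)
    (a : Fin n → ℝ) (b : Fin m → Fin n → ℝ) (a₀ : ℝ) (β : Fin m → ℝ)
    (P : (Fin n → ℝ) → ℝ)
    (hP : ∀ x, P x = (1 / 2) * (x ⬝ᵥ (A *ᵥ x)) - a ⬝ᵥ x - a₀)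
    (g : Fin m → (Fin n → ℝ) → ℝ)
    (hg : ∀ k x, g k x = (1 / 2) * (x ⬝ᵥ (B k *ᵥ x)) - b k ⬝ᵥ x - β k)
    (σb : Fin m → ℝ) (hσ : 0 ≤ σb)
    (G : Matrix (Fin n) (Fin n) ℝ) (hG : G = A + ∑ k, σb k • B k)
    (F : Fin n → ℝ) (hF : F = a + ∑ k, σb k • b k)
    (xb : Fin n → ℝ)
    (hstat : G *ᵥ xb = F)
    (hcs : ∀ k, σb k * g k xb = 0)
    (hpsd : G.PosSemidef) :
    ∀ x : Fin n → ℝ, (∀ k, g k x ≤ 0) → P xb ≤ P x := by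
  have hlagrangian : ∀ y, P y + ∑ k, σb k * g k y
      = quadraticFun G F y - (a₀ + ∑ k, σb k * β k) := by
    intro y
    rw [hG, hF, quadraticFun_add_sum_smul]
    simp only [quadraticFun, hP, hg, mul_sub, Finset.sum_sub_distrib]
    ring
  intro x hx
  refine le_of_forall_lagrangian_le P g hσ (fun y => ?_) hcs hx
  rw [hlagrangian, hlagrangian]
  linarith [hpsd.quadraticFun_le_of_mulVec_eq hstat y]

/-- Global optimality condition (Theorem 1). -/
theorem global_optimality_condition
    (n m : ℕ)
    (A : Matrix (Fin n) (Fin n) ℝ) (B : Fin m → Matrix (Fin n) (Fin n) ℝ)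
    (a : Fin n → ℝ) (b : Fin m → Fin n → ℝ) (a₀ : ℝ) (β : Fin m → ℝ)
    (hA : A.IsSymm) (hB : ∀ k, (B k).IsSymm)
    (P : (Fin n → ℝ) → ℝ)
    (hP : ∀ x, P x = (1 / 2) * (x ⬝ᵥ (A *ᵥ x)) - a ⬝ᵥ x - a₀)
    (g : Fin m → (Fin n → ℝ) → ℝ)
    (hg : ∀ k x, g k x = (1 / 2) * (x ⬝ᵥ (B k *ᵥ x)) - b k ⬝ᵥ x - β k)
    (σb : Fin m → ℝ) (hσ : 0 ≤ σb)
    (G : Matrix (Fin n) (Fin n) ℝ) (hG : G = A + ∑ k, σb k • B k)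
    (F : Fin n → ℝ) (hF : F = a + ∑ k, σb k • b k)
    (xb : Fin n → ℝ)
    (hstat : G *ᵥ xb = F)
    (hfeas : ∀ k, g k xb ≤ 0)
    (hcs : ∀ k, σb k * g k xb = 0)
    (hpsd : G.PosSemidef) :
    ∀ x : Fin n → ℝ, (∀ k, g k x ≤ 0) → P xb ≤ P x :=
  global_optimality_condition_general n m A B a b a₀ β P hP g hg σb hσ G hG F hF xb hstat hcs hpsd
end

section
/- Under the hypotheses of the global optimality condition, if in addition G(σ̄) is positive definite, then x̄ = G(σ̄)⁻¹ F(σ̄) is the unique solution of the stationarity equation and is a global minimizer of P on the feasible set; moreover, any other feasible global minimizer x satisfying P(x) = P(x̄) must equal x̄. -/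
/-!
Weak Lagrangian duality: with multipliers `σ ≥ 0`, the Lagrangian `P + ∑ σₖ gₖ` lies below `P`
on the feasible set and, by complementary slackness, agrees with `P` at `x̄`. For quadratic data
the Lagrangian is the quadratic `½ xᵀ G x - F ⬝ x - c`, and since `G x̄ = F` its excess over its
value at `x̄` is `½ (x - x̄)ᵀ G (x - x̄)`. Hence `P x - P x̄ ≥ ½ (x - x̄)ᵀ G (x - x̄)` for feasible
`x`, which is positive unless `x = x̄` when `G` is positive definite.
-/

open Matrix

section Lagrangian

variable {E κ : Type*} [Fintype κ]

def lagrangian (P : E → ℝ) (g : κ → E → ℝ) (σ : κ → ℝ) (x : E) : ℝ :=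
  P x + ∑ k, σ k * g k x

theorem lagrangian_le {P : E → ℝ} {g : κ → E → ℝ} {σ : κ → ℝ} {x : E} (hσ : 0 ≤ σ)
    (hx : ∀ k, g k x ≤ 0) : lagrangian P g σ x ≤ P x :=
  add_le_of_nonpos_right <| Finset.sum_nonpos fun k _ ↦ mul_nonpos_of_nonneg_of_nonpos (hσ k) (hx k)

theorem lagrangian_eq_of_complementary {P : E → ℝ} {g : κ → E → ℝ} {σ : κ → ℝ} {x : E}
    (hcs : ∀ k, σ k * g k x = 0) : lagrangian P g σ x = P x := by
  simp [lagrangian, hcs]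

end Lagrangian

section Quadratic

variable {ι : Type*} [Fintype ι]

noncomputable def quadratic (Q : Matrix ι ι ℝ) (c : ι → ℝ) (d : ℝ) (x : ι → ℝ) : ℝ :=
  1 / 2 * (x ⬝ᵥ (Q *ᵥ x)) - c ⬝ᵥ x - d

theorem quadratic_add (Q₁ Q₂ : Matrix ι ι ℝ) (c₁ c₂ : ι → ℝ) (d₁ d₂ : ℝ) (x : ι → ℝ) :
    quadratic (Q₁ + Q₂) (c₁ + c₂) (d₁ + d₂) x = quadratic Q₁ c₁ d₁ x + quadratic Q₂ c₂ d₂ x := by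
  simp only [quadratic, add_mulVec, dotProduct_add, add_dotProduct]
  ring

theorem quadratic_smul (t : ℝ) (Q : Matrix ι ι ℝ) (c : ι → ℝ) (d : ℝ) (x : ι → ℝ) :
    quadratic (t • Q) (t • c) (t * d) x = t * quadratic Q c d x := by
  simp only [quadratic, smul_mulVec, dotProduct_smul, smul_dotProduct, smul_eq_mul]
  ring

theorem sum_mul_quadratic {κ : Type*} (s : Finset κ) (σ : κ → ℝ) (Q : κ → Matrix ι ι ℝ)
    (c : κ → ι → ℝ) (d : κ → ℝ) (x : ι → ℝ) :
    ∑ k ∈ s, σ k * quadratic (Q k) (c k) (d k) x =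
      quadratic (∑ k ∈ s, σ k • Q k) (∑ k ∈ s, σ k • c k) (∑ k ∈ s, σ k * d k) x := by
  classical
  induction s using Finset.induction_on with
  | empty => simp [quadratic]
  | insert k s hk ih => simp only [Finset.sum_insert hk, ih, quadratic_add, quadratic_smul]

theorem lagrangian_quadratic {κ : Type*} [Fintype κ] (A : Matrix ι ι ℝ) (a : ι → ℝ) (a₀ : ℝ)
    (B : κ → Matrix ι ι ℝ) (b : κ → ι → ℝ) (β : κ → ℝ) (σ : κ → ℝ) :
    lagrangian (quadratic A a a₀) (fun k ↦ quadratic (B k) (b k) (β k)) σ =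
      quadratic (A + ∑ k, σ k • B k) (a + ∑ k, σ k • b k) (a₀ + ∑ k, σ k * β k) := by
  ext x
  rw [lagrangian, sum_mul_quadratic, quadratic_add]

theorem quadratic_sub_quadratic_of_mulVec_eq {Q : Matrix ι ι ℝ} {c x₀ : ι → ℝ} (hQ : Q.IsSymm)
    (h : Q *ᵥ x₀ = c) (d : ℝ) (x : ι → ℝ) :
    quadratic Q c d x - quadratic Q c d x₀ = 1 / 2 * ((x - x₀) ⬝ᵥ (Q *ᵥ (x - x₀))) := by
  have hx₀ : x₀ ⬝ᵥ (Q *ᵥ x) = x ⬝ᵥ c := by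
    rw [dotProduct_mulVec, ← mulVec_transpose, hQ.eq, h, dotProduct_comm]
  simp only [quadratic, mulVec_sub, sub_dotProduct, dotProduct_sub, hx₀, h, dotProduct_comm c]
  ring

end Quadratic

theorem global_optimality_posdef_unique_general
    (n m : ℕ)
    (A : Matrix (Fin n) (Fin n) ℝ) (B : Fin m → Matrix (Fin n) (Fin n) ℝ)
    (a : Fin n → ℝ) (b : Fin m → Fin n → ℝ) (a₀ : ℝ) (β : Fin m → ℝ)
    (P : (Fin n → ℝ) → ℝ)
    (hP : ∀ x, P x = (1 / 2) * (x ⬝ᵥ (A *ᵥ x)) - a ⬝ᵥ x - a₀)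
    (g : Fin m → (Fin n → ℝ) → ℝ)
    (hg : ∀ k x, g k x = (1 / 2) * (x ⬝ᵥ (B k *ᵥ x)) - b k ⬝ᵥ x - β k)
    (σb : Fin m → ℝ) (hσ : 0 ≤ σb)
    (G : Matrix (Fin n) (Fin n) ℝ) (hG : G = A + ∑ k, σb k • B k)
    (F : Fin n → ℝ) (hF : F = a + ∑ k, σb k • b k)
    (xb : Fin n → ℝ)
    (hstat : G *ᵥ xb = F)
    (hcs : ∀ k, σb k * g k xb = 0)
    (hpd : G.PosDef) :
    xb = G⁻¹ *ᵥ F ∧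
    (∀ y : Fin n → ℝ, G *ᵥ y = F → y = xb) ∧
    (∀ x : Fin n → ℝ, (∀ k, g k x ≤ 0) → P xb ≤ P x) ∧
    (∀ x : Fin n → ℝ, (∀ k, g k x ≤ 0) → P x = P xb → x = xb) := by
  have hL : lagrangian P g σb = quadratic G F (a₀ + ∑ k, σb k * β k) := by
    obtain rfl : P = quadratic A a a₀ := funext hP
    obtain rfl : g = fun k ↦ quadratic (B k) (b k) (β k) := funext₂ hg
    rw [hG, hF, lagrangian_quadratic]
  have hG_symm : G.IsSymm := isHermitian_iff_isSymm.1 hpd.isHermitian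
  have growth (x) (hx : ∀ k, g k x ≤ 0) : 1 / 2 * ((x - xb) ⬝ᵥ (G *ᵥ (x - xb))) ≤ P x - P xb :=
    calc _ = lagrangian P g σb x - lagrangian P g σb xb := by
          rw [hL, quadratic_sub_quadratic_of_mulVec_eq hG_symm hstat]
      _ ≤ P x - P xb := by
          rw [lagrangian_eq_of_complementary hcs]
          linarith [lagrangian_le (P := P) hσ hx]
  have hG_unit : IsUnit G := hpd.isUnit
  refine ⟨?_, fun y hy ↦ mulVec_injective_iff_isUnit.2 hG_unit (hy.trans hstat.symm),
    fun x hx ↦ ?_, fun x hx hPx ↦ ?_⟩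
  · rw [← hstat, mulVec_mulVec, nonsing_inv_mul G ((isUnit_iff_isUnit_det G).1 hG_unit),
      one_mulVec]
  · have := hpd.posSemidef.dotProduct_mulVec_nonneg (x - xb)
    rw [star_trivial] at this
    linarith [growth x hx]
  · by_contra hne
    have := hpd.dotProduct_mulVec_pos (sub_ne_zero.2 hne)
    rw [star_trivial] at this
    linarith [growth x hx]

/-- Global optimality with positive definite `G(σb)`: uniqueness. -/
theorem global_optimality_posdef_unique
    (n m : ℕ)
    (A : Matrix (Fin n) (Fin n) ℝ) (B : Fin m → Matrix (Fin n) (Fin n) ℝ)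
    (a : Fin n → ℝ) (b : Fin m → Fin n → ℝ) (a₀ : ℝ) (β : Fin m → ℝ)
    (hA : A.IsSymm) (hB : ∀ k, (B k).IsSymm)
    (P : (Fin n → ℝ) → ℝ)
    (hP : ∀ x, P x = (1 / 2) * (x ⬝ᵥ (A *ᵥ x)) - a ⬝ᵥ x - a₀)
    (g : Fin m → (Fin n → ℝ) → ℝ)
    (hg : ∀ k x, g k x = (1 / 2) * (x ⬝ᵥ (B k *ᵥ x)) - b k ⬝ᵥ x - β k)
    (σb : Fin m → ℝ) (hσ : 0 ≤ σb)
    (G : Matrix (Fin n) (Fin n) ℝ) (hG : G = A + ∑ k, σb k • B k)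
    (F : Fin n → ℝ) (hF : F = a + ∑ k, σb k • b k)
    (xb : Fin n → ℝ)
    (hstat : G *ᵥ xb = F)
    (hfeas : ∀ k, g k xb ≤ 0)
    (hcs : ∀ k, σb k * g k xb = 0)
    (hpd : G.PosDef) :
    xb = G⁻¹ *ᵥ F ∧
    (∀ y : Fin n → ℝ, G *ᵥ y = F → y = xb) ∧
    (∀ x : Fin n → ℝ, (∀ k, g k x ≤ 0) → P xb ≤ P x) ∧
    (∀ x : Fin n → ℝ, (∀ k, g k x ≤ 0) → P x = P xb → x = xb) :=
  global_optimality_posdef_unique_general n m A B a b a₀ β P hP g hg σb hσ G hG F hF xb hstat hcs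
    hpd
end

section
/- Global optimality for g01: for every x ∈ ℝ^13 satisfying all the constraints of problem g01, f(x) ≥ −15, with equality at x* = (1,1,1,1,1,1,1,1,1,3,3,3,1). -/
/-! The three linking constraints `g₇, g₈, g₉` bound `x₉ + x₁₀ + x₁₁` by
`2x₃ + x₄ + 2x₅ + x₆ + 2x₇ + x₈`, and with this `f x + 15` is the sum of the nonnegative terms
`5xᵢ(1 - xᵢ)` (`i < 3`), `(1 - x₃)(5x₃ + 2)`, the slacks of `g₇, g₈, g₉` and the upper-bound
slacks `2(1 - x₄), 3(1 - x₅), 2(1 - x₆), 3(1 - x₇), 2(1 - x₈), 1 - x₁₂`. -/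

/-- Global optimality for g01: every feasible point has objective value at least −15,
with equality at `x* = (1,…,1,3,3,3,1)`. -/
theorem g01_global_optimality
    (f : (Fin 13 → ℝ) → ℝ)
    (hf : ∀ x : Fin 13 → ℝ,
      f x = 5 * (x 0 + x 1 + x 2 + x 3)
        - 5 * ((x 0) ^ 2 + (x 1) ^ 2 + (x 2) ^ 2 + (x 3) ^ 2)
        - (x 4 + x 5 + x 6 + x 7 + x 8 + x 9 + x 10 + x 11 + x 12)) :
    (∀ x : Fin 13 → ℝ,
      (2 * x 0 + 2 * x 1 + x 9 + x 10 - 10 ≤ 0) →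
      (2 * x 0 + 2 * x 2 + x 9 + x 11 - 10 ≤ 0) →
      (2 * x 1 + 2 * x 2 + x 10 + x 11 - 10 ≤ 0) →
      (-8 * x 0 + x 9 ≤ 0) →
      (-8 * x 1 + x 10 ≤ 0) →
      (-8 * x 2 + x 11 ≤ 0) →
      (-2 * x 3 - x 4 + x 9 ≤ 0) →
      (-2 * x 5 - x 6 + x 10 ≤ 0) →
      (-2 * x 7 - x 8 + x 11 ≤ 0) →
      (∀ i : Fin 13, i.val ≤ 8 → 0 ≤ x i ∧ x i ≤ 1) →
      (∀ i : Fin 13, 9 ≤ i.val ∧ i.val ≤ 11 → 0 ≤ x i ∧ x i ≤ 100) →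
      (0 ≤ x 12 ∧ x 12 ≤ 1) →
      -15 ≤ f x) ∧
    f ![1, 1, 1, 1, 1, 1, 1, 1, 1, 3, 3, 3, 1] = -15 := by
  refine ⟨fun x _ _ _ _ _ _ g₇ g₈ g₉ hbox _ h₁₂ => ?_, by rw [hf]; simp [Matrix.cons_val]; norm_num⟩
  have hsq (i : Fin 13) (hi : i.val ≤ 8) : x i ^ 2 ≤ x i :=
    pow_le_of_le_one (hbox i hi).1 (hbox i hi).2 two_ne_zero
  have hx₃ : 5 * x 3 ^ 2 - 3 * x 3 ≤ 2 := by
    obtain ⟨h₀, h₁⟩ := hbox 3 (by decide)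
    nlinarith [mul_nonneg (sub_nonneg.2 h₁) h₀]
  rw [hf]
  linarith [hsq 0 (by decide), hsq 1 (by decide), hsq 2 (by decide),
    (hbox 4 (by decide)).2, (hbox 5 (by decide)).2, (hbox 6 (by decide)).2,
    (hbox 7 (by decide)).2, (hbox 8 (by decide)).2, h₁₂.2]
end
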